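/- arXiv:2212.08389 — 3 statements merged into one kernel-verified Lean document; each statement's English description precedes it below -/
import Mathlib

section
/- Let H, Y be Hilbert spaces and B* : Y → H a bounded linear operator that is injective with dense range, such that the norm on Y equals ‖B*v‖_H. Then the bilinear form b(u,v) := ⟨u, B*v⟩_H on H × Y satisfies inf_{u≠0} sup_{v≠0} b(u,v)/(‖u‖_H ‖v‖_Y) = 1 and sup_{u≠0} sup_{v≠0} b(u,v)/(‖u‖_H ‖v‖_Y) = 1. -/
open scoped RealInnerProductSpace
open Set

/-!
Since `‖B* v‖ = ‖v‖`, the quotient `b(u,v) / (‖u‖ ‖v‖)` is the cosine of the angle between `u`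
and `B* v`, hence at most `1` by Cauchy–Schwarz. The cosine is continuous away from `0` and equals
`1` at `u` itself, and the range of `B*` stays dense after removing `0`, so `B* v` can be taken
close enough to `u` to push the cosine arbitrarily close to `1`. Thus the inner supremum is `1`
for every `u ≠ 0`, and so are its infimum and supremum over `u`.
-/

section

variable {H : Type*} [NormedAddCommGroup H] [InnerProductSpace ℝ H]

theorem continuousAt_inner_div_norm_mul_norm {u w : H} (hu : u ≠ 0) (hw : w ≠ 0) :
    ContinuousAt (fun x : H => ⟪u, x⟫ / (‖u‖ * ‖x‖)) w :=
  (continuous_const.inner continuous_id).continuousAt.div (by fun_prop)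
    (mul_ne_zero (norm_ne_zero_iff.2 hu) (norm_ne_zero_iff.2 hw))

theorem Dense.isLUB_inner_div_norm_mul_norm [Nontrivial H] {s : Set H} (hs : Dense s)
    {u : H} (hu : u ≠ 0) :
    IsLUB ((fun w => ⟪u, w⟫ / (‖u‖ * ‖w‖)) '' (s \ {0})) 1 := by
  refine isLUB_of_mem_closure ?_ ?_
  · rintro _ ⟨w, -, rfl⟩
    exact (abs_le.1 (abs_real_inner_div_norm_mul_norm_le_one u w)).2
  · have h := mem_closure_image (continuousAt_inner_div_norm_mul_norm hu hu)
      ((hs.sdiff_singleton 0).closure_eq ▸ mem_univ u)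
    rwa [real_inner_self_eq_norm_mul_norm, div_self
      (mul_ne_zero (norm_ne_zero_iff.2 hu) (norm_ne_zero_iff.2 hu))] at h

theorem iSup_inner_div_norm_mul_norm_eq_one {Y : Type*}
    [NormedAddCommGroup Y] [Module ℝ Y] [Nontrivial Y] [Nontrivial H]
    (B : Y →ₗ[ℝ] H) (hB : ∀ v, ‖B v‖ = ‖v‖) (hdense : DenseRange B) {u : H} (hu : u ≠ 0) :
    ⨆ v : {v : Y // v ≠ 0}, ⟪u, B v⟫ / (‖u‖ * ‖(v : Y)‖) = 1 := by
  have : Nonempty {v : Y // v ≠ 0} := nonempty_subtype.2 (exists_ne 0)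
  have hB0 (v : Y) : B v = 0 ↔ v = 0 := by rw [← norm_eq_zero, hB, norm_eq_zero]
  have hrange : range (fun v : {v : Y // v ≠ 0} => ⟪u, B v⟫ / (‖u‖ * ‖(v : Y)‖)) =
      (fun w => ⟪u, w⟫ / (‖u‖ * ‖w‖)) '' (range B \ {0}) := by
    ext t
    constructor
    · rintro ⟨⟨v, hv⟩, rfl⟩
      exact ⟨B v, ⟨⟨v, rfl⟩, (hB0 v).not.2 hv⟩, by simp only [hB]⟩
    · rintro ⟨_, ⟨⟨v, rfl⟩, hv⟩, rfl⟩
      exact ⟨⟨v, (hB0 v).not.1 hv⟩, by simp only [hB]⟩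
  exact IsLUB.ciSup_eq (hrange ▸ hdense.isLUB_inner_div_norm_mul_norm hu)

end

theorem stmt_1_general
    {H Y : Type*} [NormedAddCommGroup H] [InnerProductSpace ℝ H]
    [NormedAddCommGroup Y] [InnerProductSpace ℝ Y]
    [Nontrivial H] [Nontrivial Y]
    (Bs : Y →ₗ[ℝ] H) (hiso : ∀ v : Y, ‖Bs v‖ = ‖v‖)
    (hdense : DenseRange Bs) :
    (⨅ u : {u : H // u ≠ 0}, ⨆ v : {v : Y // v ≠ 0},
        ⟪(u : H), Bs (v : Y)⟫ / (‖(u : H)‖ * ‖(v : Y)‖)) = 1 ∧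
    (⨆ u : {u : H // u ≠ 0}, ⨆ v : {v : Y // v ≠ 0},
        ⟪(u : H), Bs (v : Y)⟫ / (‖(u : H)‖ * ‖(v : Y)‖)) = 1 := by
  have : Nonempty {u : H // u ≠ 0} := nonempty_subtype.2 (exists_ne 0)
  have hsup (u : {u : H // u ≠ 0}) :=
    iSup_inner_div_norm_mul_norm_eq_one Bs hiso hdense u.2
  simp only [hsup, ciInf_const, ciSup_const, and_self]

/-- For `B* : Y → H` a linear isometry (injective with dense range),
the bilinear form `b(u,v) = ⟨u, B*v⟩_H` has inf-sup and continuity constants equal to 1. -/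
theorem stmt_1
    {H Y : Type*} [NormedAddCommGroup H] [InnerProductSpace ℝ H] [CompleteSpace H]
    [NormedAddCommGroup Y] [InnerProductSpace ℝ Y] [CompleteSpace Y]
    [Nontrivial H] [Nontrivial Y]
    (Bs : Y →ₗ[ℝ] H) (hiso : ∀ v : Y, ‖Bs v‖ = ‖v‖)
    (hinj : Function.Injective Bs) (hdense : DenseRange Bs) :
    (⨅ u : {u : H // u ≠ 0}, ⨆ v : {v : Y // v ≠ 0},
        ⟪(u : H), Bs (v : Y)⟫ / (‖(u : H)‖ * ‖(v : Y)‖)) = 1 ∧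
    (⨆ u : {u : H // u ≠ 0}, ⨆ v : {v : Y // v ≠ 0},
        ⟪(u : H), Bs (v : Y)⟫ / (‖(u : H)‖ * ‖(v : Y)‖)) = 1 :=
  stmt_1_general Bs hiso hdense
end

section
/- Let H, Y be Hilbert spaces and B* : Y → H an isometric isomorphism onto a dense subspace of H, with b(u,v) := ⟨u, B*v⟩_H. Then for every f ∈ Y' there exists a unique u ∈ H such that b(u,v) = f(v) for all v ∈ Y. -/
/-!
An isometry out of a complete space has closed range, so the dense range of `B*` is all of `H`
and `B*` is an isometric isomorphism. The solution is then the Riesz representative of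
`f ∘ (B*)⁻¹`, and it is unique because `⟪u, B* v⟫` runs over `⟪u, h⟫` for every `h ∈ H`.
-/

open scoped RealInnerProductSpace

theorem LinearIsometry.surjective_of_denseRange {R E F : Type*} [Semiring R]
    [NormedAddCommGroup E] [Module R E] [CompleteSpace E]
    [NormedAddCommGroup F] [Module R F]
    (B : E →ₗᵢ[R] F) (hB : DenseRange B) : Function.Surjective B := by
  intro y
  simpa only [B.isometry.isClosedEmbedding.isClosed_range.closure_eq, Set.mem_range] using hB y

theorem LinearIsometryEquiv.existsUnique_inner_eq {𝕜 H Y : Type*} [RCLike 𝕜]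
    [NormedAddCommGroup H] [InnerProductSpace 𝕜 H] [CompleteSpace H]
    [NormedAddCommGroup Y] [NormedSpace 𝕜 Y]
    (e : Y ≃ₗᵢ[𝕜] H) (f : Y →L[𝕜] 𝕜) :
    ∃! u : H, ∀ v : Y, inner 𝕜 u (e v) = f v := by
  refine ⟨(InnerProductSpace.toDual 𝕜 H).symm (f.comp (e.symm : H →L[𝕜] Y)), fun v => by simp,
    fun u hu => ext_inner_right 𝕜 fun h => ?_⟩
  obtain ⟨v, rfl⟩ := e.surjective h
  simp [hu v]

theorem stmt_2_general
    {H Y : Type*} [NormedAddCommGroup H] [InnerProductSpace ℝ H] [CompleteSpace H]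
    [NormedAddCommGroup Y] [InnerProductSpace ℝ Y] [CompleteSpace Y]
    (Bs : Y →ₗ[ℝ] H) (hiso : ∀ v : Y, ‖Bs v‖ = ‖v‖)
    (hdense : DenseRange Bs)
    (f : Y →L[ℝ] ℝ) :
    ∃! u : H, ∀ v : Y, ⟪u, Bs v⟫ = f v :=
  let B : Y →ₗᵢ[ℝ] H := ⟨Bs, hiso⟩
  (LinearIsometryEquiv.ofSurjective B (B.surjective_of_denseRange hdense)).existsUnique_inner_eq f

/-- Ultra-weak well-posedness: for `B* : Y → H` a linear isometry with dense
range, for every `f ∈ Y'` there is a unique `u ∈ H` with `⟨u, B*v⟩ = f(v)` for all `v`. -/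
theorem stmt_2
    {H Y : Type*} [NormedAddCommGroup H] [InnerProductSpace ℝ H] [CompleteSpace H]
    [NormedAddCommGroup Y] [InnerProductSpace ℝ Y] [CompleteSpace Y]
    (Bs : Y →ₗ[ℝ] H) (hiso : ∀ v : Y, ‖Bs v‖ = ‖v‖)
    (hinj : Function.Injective Bs) (hdense : DenseRange Bs)
    (f : Y →L[ℝ] ℝ) :
    ∃! u : H, ∀ v : Y, ⟪u, Bs v⟫ = f v :=
  stmt_2_general Bs hiso hdense f
end

section
/- Under the ultra-weak well-posedness setting (inf-sup and continuity constants both equal to 1), for the exact solution u ∈ H of b(u,v) = f(v) for all v ∈ Y and any approximation w ∈ H, the error equals the dual norm of the residual: ‖u - w‖_H = ‖f - B w‖_{Y'}, where (Bw)(v) := b(w,v). -/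
open scoped RealInnerProductSpace

/-! The residual `f - B w` is the functional `v ↦ ⟪u - w, B* v⟫`, i.e. the Riesz functional of
`u - w` composed with `B*`. Precomposing with an isometry of dense range does not change the
operator norm, and the Riesz functional of `u - w` has norm `‖u - w‖`. -/

theorem ContinuousLinearMap.opNorm_comp_eq_of_denseRange
    {𝕜 E F G : Type*} [NontriviallyNormedField 𝕜]
    [SeminormedAddCommGroup E] [SeminormedAddCommGroup F] [SeminormedAddCommGroup G]
    [NormedSpace 𝕜 E] [NormedSpace 𝕜 F] [NormedSpace 𝕜 G]
    (g : F →L[𝕜] G) (T : E →L[𝕜] F) (hT : ∀ v, ‖T v‖ = ‖v‖) (hdense : DenseRange T) :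
    ‖g.comp T‖ = ‖g‖ := by
  refine le_antisymm ?_ ?_
  · refine (g.comp T).opNorm_le_bound (norm_nonneg g) fun v => ?_
    simpa only [comp_apply, hT] using g.le_opNorm (T v)
  · refine g.opNorm_le_bound (norm_nonneg _) fun x => ?_
    refine hdense.induction_on x (isClosed_le (by fun_prop) (by fun_prop)) fun v => ?_
    simpa only [comp_apply, hT] using (g.comp T).le_opNorm v

theorem stmt_3_general
    {H Y : Type*} [NormedAddCommGroup H] [InnerProductSpace ℝ H]
    [NormedAddCommGroup Y] [InnerProductSpace ℝ Y]
    (Bs : Y →L[ℝ] H) (hiso : ∀ v : Y, ‖Bs v‖ = ‖v‖)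
    (hdense : DenseRange Bs)
    (B : H →L[ℝ] (Y →L[ℝ] ℝ)) (hB : ∀ (w : H) (v : Y), B w v = ⟪w, Bs v⟫)
    (f : Y →L[ℝ] ℝ) (u : H) (hu : ∀ v : Y, ⟪u, Bs v⟫ = f v) (w : H) :
    ‖u - w‖ = ‖f - B w‖ := by
  have hresidual : f - B w = (innerSL ℝ (u - w)).comp Bs := by
    ext v
    simp [hB, ← hu v]
  rw [hresidual, (innerSL ℝ (u - w)).opNorm_comp_eq_of_denseRange Bs hiso hdense,
    innerSL_apply_norm]

/-- Error-residual identity in the ultra-weak setting: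
`‖u - w‖_H = ‖f - Bw‖_{Y'}` where `(Bw)(v) = b(w,v) = ⟨w, B*v⟩`. -/
theorem stmt_3
    {H Y : Type*} [NormedAddCommGroup H] [InnerProductSpace ℝ H] [CompleteSpace H]
    [NormedAddCommGroup Y] [InnerProductSpace ℝ Y] [CompleteSpace Y]
    (Bs : Y →L[ℝ] H) (hiso : ∀ v : Y, ‖Bs v‖ = ‖v‖)
    (hinj : Function.Injective Bs) (hdense : DenseRange Bs)
    (B : H →L[ℝ] (Y →L[ℝ] ℝ)) (hB : ∀ (w : H) (v : Y), B w v = ⟪w, Bs v⟫)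
    (f : Y →L[ℝ] ℝ) (u : H) (hu : ∀ v : Y, ⟪u, Bs v⟫ = f v) (w : H) :
    ‖u - w‖ = ‖f - B w‖ :=
  stmt_3_general Bs hiso hdense B hB f u hu w
end
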